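/- (Extension of periodic Carathéodory integrands to separately continuous integrands.) For every η > 0 and λ > 0 there exist a compact set K_η ⊂ Ω and a function f^{η,λ} : ℝ^N × ℝ^m × ℝ^{d×N} → ℝ such that: (i) L^N(Ω ∖ K_η) < η, where L^N is N-dimensional Lebesgue measure; (ii) f^{η,λ}(x,y;ξ) = f(x,y;ξ) for all (x,y,ξ) ∈ K_η × ℝ^m × B̄(0,λ), where B̄(0,λ) := {ξ ∈ ℝ^{d×N} : |ξ| ≤ λ}; (iii) for every y ∈ ℝ^m, the map (x,ξ) ↦ f^{η,λ}(x,y;ξ) is continuous on ℝ^N × ℝ^{d×N}; (iv) for all (x,ξ) ∈ ℝ^N × ℝ^{d×N}, the map y ↦ f^{η,λ}(x,y;ξ) is continuous and (0,1)^m-periodic; and (v) −β ≤ f^{η,λ}(x,y;ξ) ≤ β(1+λ^p) for all (x,y,ξ) ∈ ℝ^N × ℝ^m × ℝ^{d×N}. -/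

import Mathlib

open MeasureTheory Filter Topology
open scoped ENNReal Classical

set_option maxHeartbeats 1000000
set_option synthInstance.maxHeartbeats 1000000

noncomputable section

/-! Basic linear-algebra notation: vectors in ℝⁿ and d×n matrices (given by rows). -/

abbrev Vec (n : ℕ) := Fin n → ℝ
abbrev Mat (d n : ℕ) := Fin d → Fin n → ℝ

/-- In-plane projection `x ↦ x_α = (x₁, x₂)`. -/
def pr (x : Vec 3) : Vec 2 := Fin.init x

/-- The point `(x_α, t) ∈ ℝ³`. -/
def emb (xα : Vec 2) (t : ℝ) : Vec 3 := Fin.snoc xα t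

/-- The interval `I = (-1, 1)`. -/
def II : Set ℝ := Set.Ioo (-1) 1

/-- The cylinder `A × I ⊆ ℝ³` over a planar set `A`. -/
def cyl (A : Set (Vec 2)) : Set (Vec 3) := {x | pr x ∈ A ∧ x 2 ∈ II}

/-- The open square `(0, T)²`. -/
def square (T : ℝ) : Set (Vec 2) := {y | ∀ i, y i ∈ Set.Ioo 0 T}

/-- First two columns `D_α` of a 3×3 matrix. -/
def colsA (ξ : Mat 3 3) : Mat 3 2 := fun k => Fin.init (ξ k)

/-- Third column `D₃` of a 3×3 matrix. -/
def col3 (ξ : Mat 3 3) : Vec 3 := fun k => ξ k 2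

/-- The 3×3 matrix `(ξ̄ | z)` whose first two columns are those of `ξ̄` and third column `z`. -/
def cat (ξb : Mat 3 2) (z : Vec 3) : Mat 3 3 := fun k => Fin.snoc (ξb k) (z k)

/-- Pointwise gradient (Jacobian matrix) of a (smooth) map. -/
def smoothGrad {n d : ℕ} (ψ : Vec n → Vec d) : Vec n → Mat d n :=
  fun x k i => fderiv ℝ (fun y => ψ y k) x (Pi.single i 1)

/-- `Du` is a weak gradient of `u` on the open set `U`, in the sense of integration by parts
against test functions `φ ∈ C_c^∞(U)`. -/
def IsWeakGradOn {n d : ℕ} (U : Set (Vec n)) (u : Vec n → Vec d)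
    (Du : Vec n → Mat d n) : Prop :=
  ∀ φ : Vec n → ℝ, ContDiff ℝ (⊤ : ℕ∞) φ → HasCompactSupport φ → tsupport φ ⊆ U →
    ∀ (k : Fin d) (i : Fin n),
      ∫ x in U, u x k * fderiv ℝ φ x (Pi.single i 1) = - ∫ x in U, Du x k i * φ x

/-- `u ∈ W^{1,p}(U; ℝ^d)` with weak gradient `Du ∈ L^p(U; ℝ^{d×n})`. -/
structure MemW1p {n d : ℕ} (p : ℝ) (U : Set (Vec n)) (u : Vec n → Vec d)
    (Du : Vec n → Mat d n) : Prop where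
  memLp : MemLp u (ENNReal.ofReal p) (volume.restrict U)
  memLp_grad : MemLp Du (ENNReal.ofReal p) (volume.restrict U)
  isWeakGrad : IsWeakGradOn U u Du

/-- Smooth maps on `ℝ³` vanishing in a neighborhood of the lateral boundary `∂A × Ī`
(i.e. whose in-plane support is a compact subset of `A`). -/
def SmoothLatZero (A : Set (Vec 2)) (ψ : Vec 3 → Vec 3) : Prop :=
  ContDiff ℝ (⊤ : ℕ∞) ψ ∧ ∃ K : Set (Vec 2), IsCompact K ∧ K ⊆ A ∧ ∀ x : Vec 3, pr x ∉ K → ψ x = 0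

/-- `φ ∈ W^{1,p}(A×I; ℝ³)` with `φ = 0` on `∂A × I`, in the sense that `φ` lies in the
`W^{1,p}`-closure of smooth maps vanishing in a neighborhood of the lateral boundary. -/
def LatZeroW1p (p : ℝ) (A : Set (Vec 2)) (φ : Vec 3 → Vec 3) (Dφ : Vec 3 → Mat 3 3) : Prop :=
  MemW1p p (cyl A) φ Dφ ∧
  ∀ δ : ℝ, 0 < δ → ∃ ψ : Vec 3 → Vec 3, SmoothLatZero A ψ ∧
    eLpNorm (fun x => φ x - ψ x) (ENNReal.ofReal p) (volume.restrict (cyl A)) +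
      eLpNorm (fun x => Dφ x - smoothGrad ψ x) (ENNReal.ofReal p) (volume.restrict (cyl A))
      < ENNReal.ofReal δ

/-- The cell energy `∫_{A×I} W(x_α, y₃, y_α; (ξ̄ + D_αφ(y) | D₃φ(y))) dy`. -/
def cellEnergy (W : Vec 3 → Vec 2 → Mat 3 3 → ℝ) (xα : Vec 2) (ξb : Mat 3 2)
    (A : Set (Vec 2)) (Dφ : Vec 3 → Mat 3 3) : ℝ :=
  ∫ y in cyl A, W (emb xα (y 2)) (pr y) (cat (ξb + colsA (Dφ y)) (col3 (Dφ y)))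

/-- `m(x_α, ξ̄, T)`: the normalized infimum of the cell energy on `(0,T)² × I` over all
`φ ∈ W^{1,p}((0,T)²×I; ℝ³)` with `φ = 0` on `∂(0,T)² × I`. -/
def cellInf (W : Vec 3 → Vec 2 → Mat 3 3 → ℝ) (p : ℝ) (xα : Vec 2) (ξb : Mat 3 2)
    (T : ℝ) : ℝ :=
  sInf {c : ℝ | ∃ φ Dφ, LatZeroW1p p (square T) φ Dφ ∧
    c = (1 / (2 * T ^ 2)) * cellEnergy W xα ξb (square T) Dφ}

/-- The homogenized stored energy `W_hom(x_α; ξ̄) = lim_{T→+∞} m(x_α, ξ̄, T)`. -/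
def Whom (W : Vec 3 → Vec 2 → Mat 3 3 → ℝ) (p : ℝ) (xα : Vec 2) (ξb : Mat 3 2) : ℝ :=
  limUnder atTop (fun T : ℝ => cellInf W p xα ξb T)

/-- The rescaled oscillating integrand `x ↦ W(x, x_α/ε; (D_αu(x) | (1/ε) D₃u(x)))`. -/
def integrandE (W : Vec 3 → Vec 2 → Mat 3 3 → ℝ) (ε : ℝ) (Du : Vec 3 → Mat 3 3)
    (x : Vec 3) : ℝ :=
  W x (ε⁻¹ • pr x) (cat (colsA (Du x)) (ε⁻¹ • col3 (Du x)))

/-- The (localized) functional `I_ε(·; A)` on `L^p(A×I; ℝ³)`, with value `+∞` outside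
`W^{1,p}(A×I; ℝ³)` (the value on `W^{1,p}` does not depend on the choice of the weak
gradient, which is a.e. unique). -/
def IepsE (W : Vec 3 → Vec 2 → Mat 3 3 → ℝ) (p ε : ℝ) (A : Set (Vec 2))
    (u : Vec 3 → Vec 3) : EReal :=
  if h : ∃ Du, MemW1p p (cyl A) u Du then
    ((∫ x in cyl A, integrandE W ε h.choose x : ℝ) : EReal)
  else ⊤

/-- `u ∈ W^{1,p}(A; ℝ³)`, identified with the subset of `W^{1,p}(A×I; ℝ³)` of maps with
`D₃u = 0` a.e., i.e. maps a.e. equal to a planar Sobolev map `v(x_α)`. -/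
def IsPlanar (p : ℝ) (A : Set (Vec 2)) (u : Vec 3 → Vec 3) : Prop :=
  ∃ (v : Vec 2 → Vec 3) (Dv : Vec 2 → Mat 3 2), MemW1p p A v Dv ∧
    ∀ᵐ x ∂(volume.restrict (cyl A)), u x = v (pr x)

/-- The (localized) homogenized functional
`I_hom(u; A) = 2 ∫_A W_hom(x_α; D_αu(x_α)) dx_α` if `u ∈ W^{1,p}(A; ℝ³)`, `+∞` otherwise. -/
def IhomE (W : Vec 3 → Vec 2 → Mat 3 3 → ℝ) (p : ℝ) (A : Set (Vec 2))
    (u : Vec 3 → Vec 3) : EReal :=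
  if h : IsPlanar p A u then
    ((2 * ∫ xα in A, Whom W p xα (h.choose_spec.choose xα) : ℝ) : EReal)
  else ⊤

/-- Strong convergence `u_j → u` in `L^p(A×I; ℝ³)`. -/
def TendstoLp (p : ℝ) (A : Set (Vec 2)) (uj : ℕ → Vec 3 → Vec 3) (u : Vec 3 → Vec 3) : Prop :=
  Tendsto (fun j => eLpNorm (fun x => uj j x - u x) (ENNReal.ofReal p)
    (volume.restrict (cyl A))) atTop (nhds 0)

namespace CaraAux

instance factOneLtPos : Fact ((0:ℝ) < 1) := ⟨one_pos⟩

abbrev Torus (m : ℕ) := Fin m → AddCircle (1:ℝ)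

/-- quotient map to the torus -/
def torusMk (m : ℕ) (y : Vec m) : Torus m := fun j => (y j : AddCircle (1:ℝ))

/-- a (discontinuous) lift from the torus -/
def torusLift (m : ℕ) (w : Torus m) : Vec m := fun j => (AddCircle.equivIco 1 0 (w j) : ℝ)

lemma torusMk_torusLift (m : ℕ) (w : Torus m) : torusMk m (torusLift m w) = w := by
  funext j
  exact (AddCircle.equivIco 1 0).symm_apply_apply (w j)

lemma exists_int_add (m : ℕ) (y : Vec m) :
    ∃ i : Fin m → ℤ, (torusLift m (torusMk m y)) + (fun j => (i j : ℝ)) = y := by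
  have h : ∀ j : Fin m, ∃ k : ℤ, torusLift m (torusMk m y) j + (k : ℝ) = y j := by
    intro j
    have h := congrFun (torusMk_torusLift m (torusMk m y)) j
    have h2 : ((torusLift m (torusMk m y) j : ℝ) : AddCircle (1:ℝ)) = ((y j : ℝ) : AddCircle (1:ℝ)) := h
    rw [QuotientAddGroup.eq_iff_sub_mem] at h2
    obtain ⟨k, hk⟩ := h2
    simp only [zsmul_eq_mul, mul_one] at hk
    exact ⟨-k, by push_cast; linarith [hk]⟩
  choose i hi using h
  exact ⟨i, funext fun j => hi j⟩

lemma torusMk_add_int (m : ℕ) (y : Vec m) (i : Fin m → ℤ) :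
    torusMk m (y + fun j => (i j : ℝ)) = torusMk m y := by
  funext j
  show ((y j + (i j : ℝ) : ℝ) : AddCircle (1:ℝ)) = ((y j : ℝ) : AddCircle (1:ℝ))
  rw [AddCircle.coe_add]
  have : (((i j : ℝ)) : AddCircle (1:ℝ)) = 0 := by
    rw [AddCircle.coe_eq_zero_iff]; exact ⟨i j, by simp⟩
  rw [this, add_zero]

lemma continuous_torusMk (m : ℕ) : Continuous (torusMk m) :=
  continuous_pi fun j => continuous_quotient_mk'.comp (continuous_apply j)

lemma isOpenQuotientMap_torusMk (m : ℕ) : IsOpenQuotientMap (torusMk m) :=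
  IsOpenQuotientMap.piMap (fun _ => QuotientAddGroup.isOpenQuotientMap_mk)

end CaraAux

/-- Extension of periodic Carathéodory integrands to separately continuous
integrands, Lemma 4.1. For every η, λ > 0 there are a compact K_η ⊆ Ω with
L^N(Ω ∖ K_η) < η and an extension f^{η,λ} agreeing with f on K_η × ℝ^m × B̄(0,λ), which is
continuous in (x,ξ) for each y, continuous and (0,1)^m-periodic in y, and satisfies
−β ≤ f^{η,λ} ≤ β(1+λ^p) everywhere. -/
theorem caratheodory_extension
    (N m d : ℕ) (hN : 1 ≤ N) (hm : 1 ≤ m) (hd : 1 ≤ d)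
    (p β : ℝ) (hp : 1 ≤ p) (hβ : 0 < β)
    (Om : Set (Vec N)) (hOm : IsOpen Om) (hOmb : Bornology.IsBounded Om)
    (f : Vec N → Vec m → Mat d N → ℝ)
    -- (a): for a.e. x ∈ Ω, (y,ξ) ↦ f(x,y;ξ) is continuous
    (ha : ∀ᵐ x ∂(volume.restrict Om), Continuous (Function.uncurry (f x)))
    -- (b): for every (y,ξ), x ↦ f(x,y;ξ) is Lebesgue measurable on Ω
    (hb : ∀ (y : Vec m) (ξ : Mat d N), AEMeasurable (fun x => f x y ξ) (volume.restrict Om))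
    -- (c): (0,1)^m-periodicity in y
    (hc : ∀ᵐ x ∂(volume.restrict Om), ∀ (y : Vec m) (ξ : Mat d N) (i : Fin m → ℤ),
      f x (y + fun j => (i j : ℝ)) ξ = f x y ξ)
    -- (d): p-coercivity and p-growth
    (hgrowth : ∀ᵐ x ∂(volume.restrict Om), ∀ (y : Vec m) (ξ : Mat d N),
      (1 / β) * ‖ξ‖ ^ p - β ≤ f x y ξ ∧ f x y ξ ≤ β * (1 + ‖ξ‖ ^ p))
    (η lam : ℝ) (hη : 0 < η) (hlam : 0 < lam) :
    ∃ (K : Set (Vec N)) (g : Vec N → Vec m → Mat d N → ℝ),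
      -- (i)
      IsCompact K ∧ K ⊆ Om ∧ volume (Om \ K) < ENNReal.ofReal η ∧
      -- (ii)
      (∀ x ∈ K, ∀ (y : Vec m) (ξ : Mat d N), ‖ξ‖ ≤ lam → g x y ξ = f x y ξ) ∧
      -- (iii)
      (∀ y : Vec m, Continuous (fun q : Vec N × Mat d N => g q.1 y q.2)) ∧
      -- (iv)
      (∀ (x : Vec N) (ξ : Mat d N), Continuous (fun y => g x y ξ)) ∧
      (∀ (x : Vec N) (y : Vec m) (ξ : Mat d N) (i : Fin m → ℤ),
        g x (y + fun j => (i j : ℝ)) ξ = g x y ξ) ∧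
      -- (v)
      (∀ (x : Vec N) (y : Vec m) (ξ : Mat d N), -β ≤ g x y ξ ∧ g x y ξ ≤ β * (1 + lam ^ p)) := by
  classical
  haveI hBcs : CompactSpace ↥(Metric.closedBall (0 : Mat d N) lam) :=
    isCompact_iff_compactSpace.mp (isCompact_closedBall _ _)
  haveI : Nonempty ↥(Metric.closedBall (0 : Mat d N) lam) :=
    ⟨⟨0, Metric.mem_closedBall_self hlam.le⟩⟩
  letI : MeasurableSpace C(CaraAux.Torus m × ↥(Metric.closedBall (0 : Mat d N) lam), ℝ) := borel _
  haveI : BorelSpace C(CaraAux.Torus m × ↥(Metric.closedBall (0 : Mat d N) lam), ℝ) := ⟨rfl⟩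
  have hOm_meas : MeasurableSet Om := hOm.measurableSet
  have hp0 : (0:ℝ) ≤ p := by linarith
  set Mb : ℝ := β * (1 + lam ^ p) with hMdef
  have hlp0 : (0:ℝ) ≤ lam ^ p := Real.rpow_nonneg hlam.le p
  have hβMb : β ≤ Mb := by
    rw [hMdef]
    nlinarith
  have hMb0 : (0:ℝ) ≤ Mb := le_trans hβ.le hβMb
  -- the good set S
  have hae := (ha.and hc).and hgrowth
  have hBad0 := ae_iff.mp hae
  set t : Set (Vec N) :=
    toMeasurable (volume.restrict Om) {x | ¬((Continuous (Function.uncurry (f x)) ∧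
      ∀ (y : Vec m) (ξ : Mat d N) (i : Fin m → ℤ), f x (y + fun j => (i j : ℝ)) ξ = f x y ξ) ∧
      ∀ (y : Vec m) (ξ : Mat d N),
        (1 / β) * ‖ξ‖ ^ p - β ≤ f x y ξ ∧ f x y ξ ≤ β * (1 + ‖ξ‖ ^ p))} with htdef
  have ht_meas : MeasurableSet t := measurableSet_toMeasurable _ _
  have ht0 : volume (t ∩ Om) = 0 := by
    have h1 : volume.restrict Om t = 0 := by
      rw [htdef, measure_toMeasurable]; exact hBad0
    rwa [Measure.restrict_apply ht_meas] at h1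
  set S : Set (Vec N) := Om \ t with hSdef
  have hS_meas : MeasurableSet S := hOm_meas.diff ht_meas
  have hS_sub : S ⊆ Om := Set.diff_subset
  have hSP : ∀ x ∈ S, (Continuous (Function.uncurry (f x)) ∧
      ∀ (y : Vec m) (ξ : Mat d N) (i : Fin m → ℤ), f x (y + fun j => (i j : ℝ)) ξ = f x y ξ) ∧
      ∀ (y : Vec m) (ξ : Mat d N),
        (1 / β) * ‖ξ‖ ^ p - β ≤ f x y ξ ∧ f x y ξ ≤ β * (1 + ‖ξ‖ ^ p) := by
    intro x hx
    by_contra h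
    exact hx.2 (subset_toMeasurable _ _ h)
  have hOmS : volume (Om \ S) = 0 := by
    refine measure_mono_null (fun x hx => ?_) ht0
    rcases hx with ⟨hx1, hx2⟩
    rw [hSdef] at hx2
    constructor
    · by_contra h
      exact hx2 ⟨hx1, h⟩
    · exact hx1
  -- bounds on values
  have hval : ∀ x ∈ S, ∀ (yv : Vec m) (ξ : Mat d N), ‖ξ‖ ≤ lam →
      -β ≤ f x yv ξ ∧ f x yv ξ ≤ Mb := by
    intro x hx yv ξ hξ
    obtain ⟨h1, h2⟩ := (hSP x hx).2 yv ξ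
    constructor
    · have h3 : (0:ℝ) ≤ (1 / β) * ‖ξ‖ ^ p :=
        mul_nonneg (by positivity) (Real.rpow_nonneg (norm_nonneg _) p)
      linarith
    · have h4 : ‖ξ‖ ^ p ≤ lam ^ p := Real.rpow_le_rpow (norm_nonneg _) hξ hp0
      rw [hMdef]
      nlinarith
  -- continuity of the descended map on the torus × ball
  have hcont : ∀ x ∈ S, Continuous (fun z : CaraAux.Torus m × ↥(Metric.closedBall (0 : Mat d N) lam) =>
      f x (CaraAux.torusLift m z.1) (z.2 : Mat d N)) := by
    intro x hx
    have hq0 : IsOpenQuotientMap (Prod.map (CaraAux.torusMk m)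
        (id : ↥(Metric.closedBall (0 : Mat d N) lam) → ↥(Metric.closedBall (0 : Mat d N) lam))) :=
      (CaraAux.isOpenQuotientMap_torusMk m).prodMap IsOpenQuotientMap.id
    have hq : IsOpenQuotientMap (fun yb : Vec m × ↥(Metric.closedBall (0 : Mat d N) lam) =>
        ((CaraAux.torusMk m yb.1, yb.2) : CaraAux.Torus m × ↥(Metric.closedBall (0 : Mat d N) lam))) := by
      have heq : (fun yb : Vec m × ↥(Metric.closedBall (0 : Mat d N) lam) =>
          ((CaraAux.torusMk m yb.1, yb.2) : CaraAux.Torus m × ↥(Metric.closedBall (0 : Mat d N) lam)))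
          = Prod.map (CaraAux.torusMk m) id := by
        funext yb; cases yb; rfl
      rw [heq]; exact hq0
    rw [← hq.continuous_comp_iff]
    have heq2 : ((fun z : CaraAux.Torus m × ↥(Metric.closedBall (0 : Mat d N) lam) =>
        f x (CaraAux.torusLift m z.1) (z.2 : Mat d N)) ∘
        (fun yb : Vec m × ↥(Metric.closedBall (0 : Mat d N) lam) => (CaraAux.torusMk m yb.1, yb.2)))
        = fun yb : Vec m × ↥(Metric.closedBall (0 : Mat d N) lam) => f x yb.1 (yb.2 : Mat d N) := by
      funext yb
      show f x (CaraAux.torusLift m (CaraAux.torusMk m yb.1)) (yb.2 : Mat d N) = _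
      obtain ⟨i, hi⟩ := CaraAux.exists_int_add m yb.1
      calc f x (CaraAux.torusLift m (CaraAux.torusMk m yb.1)) (yb.2 : Mat d N)
          = f x (CaraAux.torusLift m (CaraAux.torusMk m yb.1) + fun j => (i j : ℝ)) (yb.2 : Mat d N) :=
            ((hSP x hx).1.2 _ _ i).symm
        _ = f x yb.1 (yb.2 : Mat d N) := by rw [hi]
    rw [heq2]
    exact (hSP x hx).1.1.comp (continuous_fst.prodMk (continuous_subtype_val.comp continuous_snd))
  -- the Banach-space valued function F
  set F : Vec N → C(CaraAux.Torus m × ↥(Metric.closedBall (0 : Mat d N) lam), ℝ) := fun x =>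
    if hx : x ∈ S then ⟨fun z => f x (CaraAux.torusLift m z.1) (z.2 : Mat d N), hcont x hx⟩
    else 0 with hFdef
  have hFS : ∀ x (hx : x ∈ S), F x =
      ⟨fun z => f x (CaraAux.torusLift m z.1) (z.2 : Mat d N), hcont x hx⟩ := by
    intro x hx; rw [hFdef]; exact dif_pos hx
  have hFzero : ∀ x, x ∉ S → F x = 0 := by
    intro x hx; rw [hFdef]; exact dif_neg hx
  have hFnorm : ∀ x, ‖F x‖ ≤ Mb := by
    intro x
    by_cases hx : x ∈ S
    · rw [hFS x hx]
      refine (ContinuousMap.norm_le _ hMb0).mpr ?_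
      rintro ⟨w, ξ, hξ⟩
      simp only [ContinuousMap.coe_mk]
      have hξ' : ‖ξ‖ ≤ lam := mem_closedBall_zero_iff.mp hξ
      obtain ⟨h1, h2⟩ := hval x hx (CaraAux.torusLift m w) ξ hξ'
      rw [Real.norm_eq_abs, abs_le]
      exact ⟨by linarith, h2⟩
    · rw [hFzero x hx, norm_zero]; exact hMb0
  -- measurability of evaluations
  have hFz : ∀ z : CaraAux.Torus m × ↥(Metric.closedBall (0 : Mat d N) lam),
      AEMeasurable (fun x => F x z) volume := by
    intro z
    have h1 : AEMeasurable (fun x => f x (CaraAux.torusLift m z.1) (z.2 : Mat d N))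
        (volume.restrict S) :=
      (hb _ _).mono_measure (Measure.restrict_mono hS_sub le_rfl)
    have h2 : (fun x => F x z) =
        S.indicator (fun x => f x (CaraAux.torusLift m z.1) (z.2 : Mat d N)) := by
      funext x
      by_cases hx : x ∈ S
      · rw [hFS x hx, Set.indicator_of_mem hx]; rfl
      · rw [hFzero x hx, Set.indicator_of_notMem hx]; rfl
    rw [h2]
    exact (aemeasurable_indicator_iff hS_meas).mpr h1
  -- strong measurability of F via a countable dense family of evaluations
  obtain ⟨u, hu⟩ := TopologicalSpace.exists_dense_seq
    (CaraAux.Torus m × ↥(Metric.closedBall (0 : Mat d N) lam))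
  have hFae : AEMeasurable F volume := by
    set e : C(CaraAux.Torus m × ↥(Metric.closedBall (0 : Mat d N) lam), ℝ) → (ℕ → ℝ) :=
      fun g0 k => g0 (u k) with hedef
    have he_cont : Continuous e :=
      continuous_pi fun k => continuous_eval_const (u k)
    have he_inj : Function.Injective e := by
      intro g1 g2 h12
      apply ContinuousMap.coe_injective
      refine Continuous.ext_on hu g1.continuous g2.continuous ?_
      rintro _ ⟨k, rfl⟩
      exact congrFun h12 k
    haveI : TopologicalSpace.IsCompletelyMetrizableSpace
        C(CaraAux.Torus m × ↥(Metric.closedBall (0 : Mat d N) lam), ℝ) :=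
      MetricSpace.toIsCompletelyMetrizableSpace
    have he : MeasurableEmbedding e := he_cont.measurableEmbedding he_inj
    rw [← he.aemeasurable_comp_iff]
    have h1 : ∀ k : ℕ, ∃ g : Vec N → ℝ, Measurable g ∧
        (fun x => F x (u k)) =ᵐ[volume] g := by
      intro k
      exact ⟨(hFz (u k)).mk _, (hFz (u k)).measurable_mk, (hFz (u k)).ae_eq_mk⟩
    choose Gk hGk hGkeq using h1
    refine ⟨fun x k => Gk k x, measurable_pi_lambda _ (fun k => hGk k), ?_⟩
    have h3 : ∀ᵐ x ∂volume, ∀ k, F x (u k) = Gk k x := ae_all_iff.mpr fun k => hGkeq k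
    filter_upwards [h3] with x hx
    funext k
    exact hx k
  have hFsm : AEStronglyMeasurable F volume := hFae.aestronglyMeasurable
  have hOmfin : volume Om < ⊤ := hOmb.measure_lt_top
  -- integrability of F
  have hFint : Integrable F volume := by
    have hre : IntegrableOn F Om volume := by
      haveI : IsFiniteMeasure (volume.restrict Om) :=
        ⟨by rwa [Measure.restrict_apply_univ]⟩
      exact Integrable.mono' (integrable_const Mb) hFsm.restrict
        (Filter.Eventually.of_forall fun x => hFnorm x)
    have hind : Om.indicator F = F := by
      funext x
      by_cases hx : x ∈ Om
      · rw [Set.indicator_of_mem hx]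
      · rw [Set.indicator_of_notMem hx]
        exact (hFzero x (fun hxS => hx (hS_sub hxS))).symm
    rw [← hind]
    exact (integrable_indicator_iff (f := F) (μ := volume) hOm_meas).mpr hre
  have hFmem : MemLp F 1 volume := memLp_one_iff_integrable.mpr hFint
  -- approximation by bounded continuous functions
  set q4 : ℝ≥0∞ := ENNReal.ofReal (η / 4) with hq4def
  have hq40 : q4 ≠ 0 := by
    rw [hq4def, Ne, ENNReal.ofReal_eq_zero, not_le]
    linarith
  have hgseq : ∀ n : ℕ, ∃ gb : BoundedContinuousFunction (Vec N)
      C(CaraAux.Torus m × ↥(Metric.closedBall (0 : Mat d N) lam), ℝ),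
      eLpNorm (F - ⇑gb) 1 volume ≤ ENNReal.ofReal ((2⁻¹:ℝ)^n) * (q4 * 2⁻¹^(n+1)) := by
    intro n
    have hne : ENNReal.ofReal ((2⁻¹:ℝ)^n) * (q4 * 2⁻¹^(n+1)) ≠ 0 := by
      refine mul_ne_zero ?_ (mul_ne_zero hq40 (pow_ne_zero _ (by norm_num)))
      rw [Ne, ENNReal.ofReal_eq_zero, not_le]
      positivity
    obtain ⟨gb, hgb, _⟩ := hFmem.exists_boundedContinuous_eLpNorm_sub_le ENNReal.one_ne_top hne
    exact ⟨gb, hgb⟩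
  choose gs hgs using hgseq
  -- measurable version of F
  set G : Vec N → C(CaraAux.Torus m × ↥(Metric.closedBall (0 : Mat d N) lam), ℝ) :=
    hFae.mk F with hGdef
  have hGm : Measurable G := hFae.measurable_mk
  have hFG : F =ᵐ[volume] G := hFae.ae_eq_mk
  -- bad sets A n
  set A : ℕ → Set (Vec N) := fun n => {x | (2⁻¹:ℝ)^n ≤ dist (G x) (gs n x)} with hAdef
  have hAmeas : ∀ n, MeasurableSet (A n) :=
    fun n => measurableSet_le measurable_const (hGm.dist (gs n).continuous.measurable)
  have hAbound : ∀ n, volume (A n) ≤ q4 * 2⁻¹^(n+1) := by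
    intro n
    have hedm : Measurable (fun x => edist (G x) (gs n x)) :=
      hGm.edist (gs n).continuous.measurable
    have hmark := mul_meas_ge_le_lintegral₀ (μ := volume) hedm.aemeasurable
      (ENNReal.ofReal ((2⁻¹:ℝ)^n))
    have hseteq : {x | ENNReal.ofReal ((2⁻¹:ℝ)^n) ≤ edist (G x) (gs n x)} = A n := by
      ext x
      rw [hAdef]
      simp only [Set.mem_setOf_eq]
      rw [edist_dist, ENNReal.ofReal_le_ofReal_iff dist_nonneg]
    have hlint : ∫⁻ x, edist (G x) (gs n x) ∂volume = eLpNorm (F - ⇑(gs n)) 1 volume := by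
      have h1 : ∫⁻ x, edist (G x) (gs n x) ∂volume
          = eLpNorm (fun x => G x - gs n x) 1 volume := by
        rw [eLpNorm_one_eq_lintegral_enorm]
        refine lintegral_congr fun x => ?_
        rw [edist_eq_enorm_sub]
      rw [h1]
      refine eLpNorm_congr_ae ?_
      filter_upwards [hFG] with x hx
      show G x - gs n x = (F - ⇑(gs n)) x
      rw [Pi.sub_apply, hx]
    rw [hseteq, hlint] at hmark
    have h2 := le_trans hmark (hgs n)
    exact (ENNReal.mul_le_mul_iff_right (by rw [Ne, ENNReal.ofReal_eq_zero, not_le]; positivity)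
      ENNReal.ofReal_ne_top).mp h2
  have hAsum : volume (⋃ n, A n) ≤ q4 := by
    refine le_trans (measure_iUnion_le _) ?_
    refine le_trans (ENNReal.tsum_le_tsum (fun n => hAbound n)) ?_
    rw [ENNReal.tsum_mul_left]
    have h2 : ∑' n : ℕ, (2⁻¹:ℝ≥0∞)^(n+1) = 1 := by
      have h3 : ∀ n : ℕ, (2⁻¹:ℝ≥0∞)^(n+1) = 2⁻¹^n * 2⁻¹ := fun n => pow_succ _ _
      rw [tsum_congr h3, ENNReal.tsum_mul_right, ENNReal.tsum_geometric,
        ENNReal.one_sub_inv_two, inv_inv]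
      exact ENNReal.mul_inv_cancel two_ne_zero ENNReal.ofNat_ne_top
    rw [h2, mul_one]
  -- the set W where everything is nice
  set W : Set (Vec N) := (S \ ⋃ n, A n) ∩ (toMeasurable volume {x | F x ≠ G x})ᶜ with hWdef
  have hWmeas : MeasurableSet W :=
    (hS_meas.diff (MeasurableSet.iUnion hAmeas)).inter (measurableSet_toMeasurable _ _).compl
  have hWS : W ⊆ S := fun x hx => hx.1.1
  have hWOm : W ⊆ Om := fun x hx => hS_sub (hWS hx)
  have hWFG : Set.EqOn F G W := by
    intro x hx
    by_contra h
    exact hx.2 (subset_toMeasurable _ _ h)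
  have htoM0 : volume (toMeasurable volume {x | F x ≠ G x}) = 0 := by
    rw [measure_toMeasurable]
    exact ae_iff.mp hFG
  have hOmW : volume (Om \ W) ≤ q4 := by
    have hsub : Om \ W ⊆ (Om \ S) ∪ ((⋃ n, A n) ∪ toMeasurable volume {x | F x ≠ G x}) := by
      intro x hx
      by_cases h1 : x ∈ S
      · by_cases h2 : x ∈ ⋃ n, A n
        · exact Or.inr (Or.inl h2)
        · right; right
          by_contra h3
          exact hx.2 ⟨⟨h1, h2⟩, h3⟩
      · exact Or.inl ⟨hx.1, h1⟩
    calc volume (Om \ W)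
        ≤ volume (Om \ S) + (volume (⋃ n, A n) + volume (toMeasurable volume {x | F x ≠ G x})) :=
          le_trans (measure_mono hsub) (le_trans (measure_union_le _ _)
            (add_le_add le_rfl (measure_union_le _ _)))
      _ ≤ 0 + (q4 + 0) := add_le_add (le_of_eq hOmS) (add_le_add hAsum (le_of_eq htoM0))
      _ = q4 := by simp
  -- uniform convergence on W, hence continuity of F on W
  have hWnotA : ∀ n, ∀ x ∈ W, dist (G x) (gs n x) < (2⁻¹:ℝ)^n := by
    intro n x hx
    by_contra h
    exact hx.1.2 (Set.mem_iUnion.mpr ⟨n, le_of_not_gt h⟩)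
  have hunif : TendstoUniformlyOn (fun n x => gs n x) G atTop W := by
    rw [Metric.tendstoUniformlyOn_iff]
    intro ε hε
    have hev : ∀ᶠ n : ℕ in atTop, (2⁻¹:ℝ)^n < ε :=
      (tendsto_pow_atTop_nhds_zero_of_lt_one (by norm_num) (by norm_num)).eventually_lt_const hε
    filter_upwards [hev] with n hn x hx
    exact lt_trans (hWnotA n x hx) hn
  have hGcont : ContinuousOn G W :=
    hunif.continuousOn (Filter.Eventually.of_forall fun n => (gs n).continuous.continuousOn).frequently
  have hFcont : ContinuousOn F W := hGcont.congr hWFG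
  -- the compact set K
  have hWfin : volume W ≠ ⊤ := ne_of_lt (lt_of_le_of_lt (measure_mono hWOm) hOmfin)
  obtain ⟨K, hKW, hKcomp, hKvol⟩ := hWmeas.exists_isCompact_lt_add hWfin hq40
  have hKOm : K ⊆ Om := fun x hx => hWOm (hKW hx)
  have hKfin : volume K ≠ ⊤ := ne_of_lt (lt_of_le_of_lt (measure_mono hKOm) hOmfin)
  have hOmK : volume (Om \ K) < ENNReal.ofReal η := by
    have h1 : volume (W \ K) < q4 :=
      measure_diff_lt_of_lt_add hKcomp.measurableSet.nullMeasurableSet hKW hKfin hKvol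
    have h2 : Om \ K ⊆ (Om \ W) ∪ (W \ K) := by
      intro x hx
      by_cases h3 : x ∈ W
      · exact Or.inr ⟨h3, hx.2⟩
      · exact Or.inl ⟨hx.1, h3⟩
    calc volume (Om \ K) ≤ volume (Om \ W) + volume (W \ K) :=
          le_trans (measure_mono h2) (measure_union_le _ _)
      _ < q4 + q4 := ENNReal.add_lt_add_of_le_of_lt
          (ne_top_of_le_ne_top (by rw [hq4def]; exact ENNReal.ofReal_ne_top) hOmW) hOmW h1
      _ = ENNReal.ofReal (η/4 + η/4) := by
          rw [hq4def, ENNReal.ofReal_add (by linarith) (by linarith)]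
      _ < ENNReal.ofReal η := by
          rw [ENNReal.ofReal_lt_ofReal_iff hη]; linarith
  -- joint continuity on K and the Tietze extension
  have hCCclosed : IsClosed ((K ×ˢ (Set.univ ×ˢ Metric.closedBall (0 : Mat d N) lam)) :
      Set (Vec N × CaraAux.Torus m × Mat d N)) :=
    hKcomp.isClosed.prod (isClosed_univ.prod Metric.isClosed_closedBall)
  have hH : Continuous (fun c : ↥((K ×ˢ (Set.univ ×ˢ Metric.closedBall (0 : Mat d N) lam)) :
      Set (Vec N × CaraAux.Torus m × Mat d N)) =>
      F c.1.1 (c.1.2.1, ⟨c.1.2.2, c.2.2.2⟩)) := by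
    have hFK : Continuous (fun k : ↥K => F (k : Vec N)) :=
      continuousOn_iff_continuous_restrict.mp (hFcont.mono hKW)
    have hmap : Continuous (fun c : ↥((K ×ˢ (Set.univ ×ˢ Metric.closedBall (0 : Mat d N) lam)) :
        Set (Vec N × CaraAux.Torus m × Mat d N)) =>
        ((fun k : ↥K => F (k : Vec N)) ⟨c.1.1, c.2.1⟩,
          ((c.1.2.1, ⟨c.1.2.2, c.2.2.2⟩) : CaraAux.Torus m ×
            ↥(Metric.closedBall (0 : Mat d N) lam)))) := by
      refine (hFK.comp (Continuous.subtype_mk ?_ _)).prodMk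
        (Continuous.prodMk ?_ (Continuous.subtype_mk ?_ _))
      · exact continuous_fst.comp continuous_subtype_val
      · exact continuous_fst.comp (continuous_snd.comp continuous_subtype_val)
      · exact continuous_snd.comp (continuous_snd.comp continuous_subtype_val)
    exact ContinuousEval.continuous_eval.comp hmap
  obtain ⟨Gt, hGt⟩ := ContinuousMap.exists_restrict_eq (Y := ℝ) hCCclosed ⟨_, hH⟩
  -- the extension g
  refine ⟨K, fun x yv ξ => max (-β) (min (Gt (x, CaraAux.torusMk m yv, ξ)) Mb),
    hKcomp, hKOm, hOmK, ?_, ?_, ?_, ?_, ?_⟩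
  · -- (ii) agreement with f on K × ℝ^m × B̄
    intro x hxK yv ξ hξ
    show max (-β) (min (Gt (x, CaraAux.torusMk m yv, ξ)) Mb) = f x yv ξ
    have hxS : x ∈ S := hWS (hKW hxK)
    have hmem : ((x, CaraAux.torusMk m yv, ξ) : Vec N × CaraAux.Torus m × Mat d N)
        ∈ (K ×ˢ (Set.univ ×ˢ Metric.closedBall (0 : Mat d N) lam)) :=
      ⟨hxK, ⟨trivial, mem_closedBall_zero_iff.mpr hξ⟩⟩
    have hGtv : Gt (x, CaraAux.torusMk m yv, ξ)
        = f x (CaraAux.torusLift m (CaraAux.torusMk m yv)) ξ := by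
      have h1 := congrFun (congrArg DFunLike.coe hGt) ⟨(x, CaraAux.torusMk m yv, ξ), hmem⟩
      rw [ContinuousMap.restrict_apply] at h1
      rw [h1]
      show F x (CaraAux.torusMk m yv, ⟨ξ, _⟩) = _
      rw [hFS x hxS]
      rfl
    have hper : f x (CaraAux.torusLift m (CaraAux.torusMk m yv)) ξ = f x yv ξ := by
      obtain ⟨i, hi⟩ := CaraAux.exists_int_add m yv
      calc f x (CaraAux.torusLift m (CaraAux.torusMk m yv)) ξ
          = f x (CaraAux.torusLift m (CaraAux.torusMk m yv) + fun j => (i j : ℝ)) ξ :=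
            ((hSP x hxS).1.2 _ _ i).symm
        _ = f x yv ξ := by rw [hi]
    rw [hGtv, hper]
    obtain ⟨hl, hu2⟩ := hval x hxS yv ξ hξ
    rw [min_eq_left hu2, max_eq_right hl]
  · -- (iii) joint continuity in (x, ξ)
    intro yv
    have h1 : Continuous fun q : Vec N × Mat d N => Gt (q.1, CaraAux.torusMk m yv, q.2) :=
      Gt.continuous.comp (continuous_fst.prodMk (continuous_const.prodMk continuous_snd))
    exact continuous_const.max (h1.min continuous_const)
  · -- (iv) continuity in y
    intro x ξ
    have h1 : Continuous fun yv : Vec m => Gt (x, CaraAux.torusMk m yv, ξ) :=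
      Gt.continuous.comp (continuous_const.prodMk
        ((CaraAux.continuous_torusMk m).prodMk continuous_const))
    exact continuous_const.max (h1.min continuous_const)
  · -- (iv) periodicity
    intro x yv ξ i
    show max (-β) (min (Gt (x, CaraAux.torusMk m (yv + fun j => (i j : ℝ)), ξ)) Mb)
      = max (-β) (min (Gt (x, CaraAux.torusMk m yv, ξ)) Mb)
    rw [CaraAux.torusMk_add_int]
  · -- (v) bounds
    intro x yv ξ
    refine ⟨le_max_left _ _, ?_⟩
    exact max_le (by linarith) (min_le_right _ _)
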